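/- Let (𝒜, A, A') be a quasi-twilled associative algebra over a field K with projection p' : 𝒜 → A' determined by the decomposition 𝒜 = A ⊕ A', and let B : A' → A be a linear map such that the set {B(u) + u : u ∈ A'} is closed under the multiplication of 𝒜 (i.e., B is a left deformation map). Then the bilinear operation β^B on A' defined by β^B(u,v) = p'((B(u) + u)·(B(v) + v)) is associative, i.e., (A', β^B) is an associative algebra. -/

import Mathlib

/-- `β^B(u,v) = p'((B(u) + u)·(B(v) + v))`, where `p'` is the projection onto `A'`
along `A`. -/
noncomputable def betaB {K 𝓐 : Type*} [Field K] [AddCommGroup 𝓐] [Module K 𝓐]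
    (m : 𝓐 →ₗ[K] 𝓐 →ₗ[K] 𝓐)
    {A A' : Submodule K 𝓐} (hcompl : IsCompl A A') (B : A' →ₗ[K] A) (u v : A') : A' :=
  A'.linearProjOfIsCompl A hcompl.symm
    (m (((B u : A) : 𝓐) + (u : 𝓐)) (((B v : A) : 𝓐) + (v : 𝓐)))

/-!
On the graph `{B u + u}` the projection `p'` is inverted by `x ↦ B x + x`. Closedness of the
graph therefore says `B (β^B u v) + β^B u v = (B u + u) · (B v + v)`, so both sides of the
associativity law are `p'` of the same triple product in `𝒜`.
-/

section

variable {K 𝓐 : Type*} [Field K] [AddCommGroup 𝓐] [Module K 𝓐]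
  {A A' : Submodule K 𝓐} (hcompl : IsCompl A A') (B : A' →ₗ[K] A)

theorem projectionOnto_graph_apply (w : A') :
    A'.projectionOnto A hcompl.symm (((B w : A) : 𝓐) + (w : 𝓐)) = w := by
  rw [map_add, Submodule.projectionOnto_apply_right, Submodule.projectionOnto_apply_left,
    zero_add]

theorem graph_betaB (m : 𝓐 →ₗ[K] 𝓐 →ₗ[K] 𝓐)
    (hgr : ∀ u v : A', ∃ w : A',
      m (((B u : A) : 𝓐) + (u : 𝓐)) (((B v : A) : 𝓐) + (v : 𝓐))
        = ((B w : A) : 𝓐) + (w : 𝓐)) (u v : A') :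
    ((B (betaB m hcompl B u v) : A) : 𝓐) + ((betaB m hcompl B u v : A') : 𝓐)
      = m (((B u : A) : 𝓐) + (u : 𝓐)) (((B v : A) : 𝓐) + (v : 𝓐)) := by
  obtain ⟨w, hw⟩ := hgr u v
  have hβ : betaB m hcompl B u v = w := by
    rw [betaB, hw]
    exact projectionOnto_graph_apply hcompl B w
  rw [hβ, hw]

end

theorem stmt12_general {K 𝓐 : Type*} [Field K] [AddCommGroup 𝓐] [Module K 𝓐]
    (m : 𝓐 →ₗ[K] 𝓐 →ₗ[K] 𝓐)
    (assoc : ∀ a b c : 𝓐, m (m a b) c = m a (m b c))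
    (A A' : Submodule K 𝓐) (hcompl : IsCompl A A')
    (B : A' →ₗ[K] A)
    (hgr : ∀ u v : A', ∃ w : A',
      m (((B u : A) : 𝓐) + (u : 𝓐)) (((B v : A) : 𝓐) + (v : 𝓐))
        = ((B w : A) : 𝓐) + (w : 𝓐)) :
    ∀ u v w : A',
      betaB m hcompl B (betaB m hcompl B u v) w
        = betaB m hcompl B u (betaB m hcompl B v w) := by
  intro u v w
  change A'.projectionOnto A hcompl.symm _ = A'.projectionOnto A hcompl.symm _
  rw [graph_betaB hcompl B m hgr u v, graph_betaB hcompl B m hgr v w, assoc]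

/-- if `B : A' → A` is a left deformation map of a quasi-twilled
associative algebra `(𝒜, A, A')` (the set `{B(u) + u : u ∈ A'}` is closed under the
multiplication), then `β^B` is an associative product on `A'`. -/
theorem stmt12 {K 𝓐 : Type*} [Field K] [AddCommGroup 𝓐] [Module K 𝓐]
    (m : 𝓐 →ₗ[K] 𝓐 →ₗ[K] 𝓐)
    (assoc : ∀ a b c : 𝓐, m (m a b) c = m a (m b c))
    (A A' : Submodule K 𝓐) (hcompl : IsCompl A A')
    (hA' : ∀ u ∈ A', ∀ v ∈ A', m u v ∈ A')
    (B : A' →ₗ[K] A)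
    (hgr : ∀ u v : A', ∃ w : A',
      m (((B u : A) : 𝓐) + (u : 𝓐)) (((B v : A) : 𝓐) + (v : 𝓐))
        = ((B w : A) : 𝓐) + (w : 𝓐)) :
    ∀ u v w : A',
      betaB m hcompl B (betaB m hcompl B u v) w
        = betaB m hcompl B u (betaB m hcompl B v w) :=
  stmt12_general m assoc A A' hcompl B hgr
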